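/- arXiv:2108.10607 — 5 statements merged into one kernel-verified Lean document; each statement's English description precedes it below -/
import Mathlib

section
/- Let G be a finite abelian group of order n = p_1^{a_1} ⋯ p_r^{a_r}, and let t_i be the number of distinct composition series of the Sylow p_i-subgroup of G. Then the number of distinct composition series of G equals (∏_{i=1}^{r} t_i) · (a_1 + ⋯ + a_r)! / (a_1! ⋯ a_r!). -/
/-- A composition series of `G`: a chain of subgroups from `⊥` to `⊤`, each normal in
the next with simple quotient. -/
def IsCompSeries {G : Type*} [Group G] {n : ℕ} (c : Fin (n + 1) → Subgroup G) : Prop :=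
  c 0 = ⊥ ∧ c (Fin.last n) = ⊤ ∧ ∀ i : Fin n,
    c i.castSucc ≤ c i.succ ∧
    ∃ hN : ((c i.castSucc).subgroupOf (c i.succ)).Normal,
      @IsSimpleGroup _ (@QuotientGroup.Quotient.group _ _ _ hN)

/-- The number of distinct composition series of `G`. -/
noncomputable def csCount (G : Type*) [Group G] : ℕ :=
  Nat.card (Σ n : ℕ, { c : Fin (n + 1) → Subgroup G // IsCompSeries c })

/-!
In an abelian group every subgroup is normal and a simple abelian group has prime order, so a
composition series of a finite abelian group `G` is exactly a maximal chain
`⊥ = H₀ ⋖ H₁ ⋖ ⋯ ⋖ Hₙ = ⊤` of its subgroup lattice, and its length is `n = Ω |G|`.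
The Sylow subgroups `Pᵢ` have coprime orders, so `G ≅ ∏ Pᵢ` and every subgroup of `∏ Pᵢ` is a
product of subgroups: the subgroup lattice of `G` is the product of those of the `Pᵢ`.
In a product of partial orders `u ⋖ v` means that exactly one coordinate makes a covering step,
so a maximal chain of the product amounts to the word `w` recording which coordinate moves at
each step together with a maximal chain in every factor. The factor `Pᵢ` moves exactly `aᵢ`
times, and the words with `aᵢ` letters `i` are counted by the multinomial coefficient.
-/

open Finset Function
open scoped Nat

section Words

theorem Fin.card_filter_cons_eq {ι : Type*} [DecidableEq ι] {N : ℕ} (k : ι) (w : Fin N → ι)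
    (i : ι) :
    #{j | (Fin.cons k w : Fin (N + 1) → ι) j = i} = #{j | w j = i} + if k = i then 1 else 0 := by
  rw [Fin.card_filter_univ_succ]
  simp only [Fin.cons_zero, Fin.cons_succ]
  split_ifs <;> rfl

theorem Fin.sum_univ_fun_succ {ι M : Type*} [Fintype ι] [AddCommMonoid M] {N : ℕ}
    (f : (Fin (N + 1) → ι) → M) : ∑ w, f w = ∑ k, ∑ w : Fin N → ι, f (Fin.cons k w) := by
  rw [← (Fin.consEquiv fun _ => ι).sum_comp, Fintype.sum_prod_type]
  rfl

variable {ι : Type*} [Fintype ι] [DecidableEq ι]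

theorem sum_update_pred_add_one {a : ι → ℕ} {k : ι} (hk : a k ≠ 0) :
    ∑ i, update a k (a k - 1) i + 1 = ∑ i, a i := by
  rw [sum_update_of_mem (mem_univ k), ← add_sum_erase _ _ (mem_univ k), sdiff_singleton_eq_erase]
  omega

theorem Nat.multinomial_univ_eq_sum_update {a : ι → ℕ} {N : ℕ} (hN : ∑ i, a i = N + 1) :
    Nat.multinomial univ a =
      ∑ k, if a k = 0 then 0 else Nat.multinomial univ (update a k (a k - 1)) := by
  have hterm : ∀ k, (∏ i, (a i)!) *
      (if a k = 0 then 0 else Nat.multinomial univ (update a k (a k - 1))) = a k * N ! := by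
    intro k
    split_ifs with hk
    · simp [hk]
    have hfac : ∏ i, (a i)! = a k * ∏ i, (update a k (a k - 1) i)! := by
      rw [Fintype.prod_eq_mul_prod_compl k, Fintype.prod_eq_mul_prod_compl k, update_self,
        ← mul_assoc, Nat.mul_factorial_pred hk]
      congr 1
      exact prod_congr rfl fun i hi => by rw [update_of_ne (by simpa using hi)]
    have hsum : ∑ i, update a k (a k - 1) i = N := by
      have := sum_update_pred_add_one hk
      omega
    rw [hfac, mul_assoc, Nat.multinomial_spec, hsum]
  refine Nat.eq_of_mul_eq_mul_left (prod_pos (s := univ) fun i _ => Nat.factorial_pos (a i)) ?_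
  rw [Nat.multinomial_spec, mul_sum, Fintype.sum_congr _ _ hterm, ← sum_mul, hN,
    Nat.factorial_succ]

theorem card_words_eq_multinomial {N : ℕ} {a : ι → ℕ} (hN : ∑ i, a i = N) :
    #{w : Fin N → ι | ∀ i, #{j | w j = i} = a i} = Nat.multinomial univ a := by
  induction N generalizing a with
  | zero =>
    have ha : ∀ i, a i = 0 := by simpa [sum_eq_zero_iff] using hN
    simp [ha, Nat.multinomial]
  | succ N ih =>
    have hcons (k : ι) (c : ι → ℕ) : (∀ i, c i + (if k = i then 1 else 0) = a i) ↔
        a k ≠ 0 ∧ ∀ i, c i = update a k (a k - 1) i := by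
      grind [update_apply]
    rw [card_filter, Fin.sum_univ_fun_succ, Nat.multinomial_univ_eq_sum_update hN]
    refine Fintype.sum_congr _ _ fun k => ?_
    simp only [Fin.card_filter_cons_eq, hcons, ← card_filter]
    split_ifs with hk
    · simp [hk]
    · simp only [hk, ne_eq, not_false_eq_true, true_and]
      exact ih (by have := sum_update_pred_add_one hk; omega)

theorem sum_prod_eq_multinomial_mul {N : ℕ} {a : ι → ℕ} (hN : ∑ i, a i = N) (f : ι → ℕ → ℕ)
    (hf : ∀ i m, f i m ≠ 0 → m = a i) :
    ∑ w : Fin N → ι, ∏ i, f i #{j | w j = i} = Nat.multinomial univ a * ∏ i, f i (a i) := by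
  have hterm : ∀ w : Fin N → ι, ∏ i, f i #{j | w j = i} =
      if ∀ i, #{j | w j = i} = a i then ∏ i, f i (a i) else 0 := by
    intro w
    split_ifs with hw
    · simp only [hw]
    · push Not at hw
      obtain ⟨i, hi⟩ := hw
      exact prod_eq_zero (mem_univ i) (by_contra fun h => hi (hf i _ h))
  rw [Fintype.sum_congr _ _ hterm, sum_ite, sum_const_zero, add_zero, sum_const, smul_eq_mul,
    card_words_eq_multinomial hN]

end Words

section CoverChains

variable {α β : Type*} [PartialOrder α] [PartialOrder β]

def coverChains (a b : α) (n : ℕ) : Set (Fin (n + 1) → α) :=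
  {c | c 0 = a ∧ c (Fin.last n) = b ∧ ∀ j : Fin n, c j.castSucc ⋖ c j.succ}

noncomputable def numCoverChains (a b : α) (n : ℕ) : ℕ :=
  Nat.card (coverChains a b n)

theorem numCoverChains_zero [DecidableEq α] (a b : α) :
    numCoverChains a b 0 = if a = b then 1 else 0 := by
  rw [numCoverChains]
  split_ifs with hab
  · subst hab
    have : coverChains a a 0 = {fun _ => a} := by
      ext c
      simp [coverChains, funext_iff, Fin.forall_fin_one]
    rw [this, Nat.card_unique]
  · have : coverChains a b 0 = ∅ :=
      Set.eq_empty_of_forall_notMem fun c ⟨h0, hb, _⟩ => hab (h0.symm.trans hb)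
    rw [this, Nat.card_of_isEmpty]

def coverChainsSuccEquiv (a b : α) (n : ℕ) :
    coverChains a b (n + 1) ≃ Σ u : {u // u ⋖ b}, coverChains a u n where
  toFun c := ⟨⟨c.1 (Fin.last n).castSucc, by simpa [c.2.2.1] using c.2.2.2 (Fin.last n)⟩,
    ⟨Fin.init c.1, c.2.1, rfl, fun j => c.2.2.2 j.castSucc⟩⟩
  invFun x := ⟨Fin.snoc x.2.1 b, by simpa using x.2.2.1, by simp, fun j => by
    induction j using Fin.lastCases with
    | last => simpa [x.2.2.2.1] using x.1.2
    | cast j =>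
      rw [Fin.succ_castSucc, Fin.snoc_castSucc, Fin.snoc_castSucc]
      exact x.2.2.2.2 j⟩
  left_inv c := Subtype.ext <| by
    simp only
    conv_rhs => rw [← Fin.snoc_init_self c.1]
    rw [c.2.2.1]
  right_inv x := Sigma.subtype_ext (Subtype.ext <| by simpa using x.2.2.2.1)
    (Fin.init_snoc (α := fun _ => α) b x.2.1)

theorem numCoverChains_succ [Finite α] (a b : α) (n : ℕ) [Fintype {u // u ⋖ b}] :
    numCoverChains a b (n + 1) = ∑ u : {u // u ⋖ b}, numCoverChains a u n := by
  rw [numCoverChains, Nat.card_congr (coverChainsSuccEquiv a b n), Nat.card_sigma]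
  rfl

theorem OrderIso.numCoverChains_eq (e : α ≃o β) (a b : α) (n : ℕ) :
    numCoverChains (e a) (e b) n = numCoverChains a b n :=
  Nat.card_congr <| ((Equiv.piCongrRight fun _ => e.toEquiv).subtypeEquiv fun c => by
    simp [coverChains, apply_covBy_apply_iff, e.injective.eq_iff]).symm

theorem eq_add_of_mem_coverChains (ρ : α → ℕ) (hρ : ∀ x y, x ⋖ y → ρ y = ρ x + 1) {a b : α}
    {n : ℕ} {c : Fin (n + 1) → α} (hc : c ∈ coverChains a b n) : ρ b = ρ a + n := by
  obtain ⟨h0, hn, hstep⟩ := hc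
  have key : ∀ j : Fin (n + 1), ρ (c j) = ρ a + j := by
    intro j
    induction j using Fin.induction with
    | zero => simp [h0]
    | succ j ih => rw [hρ _ _ (hstep j), ih]; simp [add_assoc]
  simpa [hn] using key (Fin.last n)

end CoverChains

section Pi

variable {ι : Type*} {α : ι → Type*} [∀ i, PartialOrder (α i)]

noncomputable def Pi.lowerCoversEquiv [DecidableEq ι] (b : ∀ i, α i) :
    (Σ i, {v // v ⋖ b i}) ≃ {u // u ⋖ b} :=
  Equiv.ofBijective
    (fun x => ⟨update b x.1 x.2, Pi.covBy_iff_exists_left_eq.2 ⟨x.1, x.2, x.2.2, rfl⟩⟩)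
    ⟨by
      rintro ⟨i, v, hv⟩ ⟨j, w, hw⟩ h
      have h := congrArg Subtype.val h
      dsimp only at h
      obtain rfl : i = j := by
        by_contra hij
        exact hv.ne (by simpa [hij] using congrFun h i)
      obtain rfl : v = w := by simpa using congrFun h i
      rfl,
    fun ⟨u, hu⟩ => by
      obtain ⟨i, v, hv, rfl⟩ := Pi.covBy_iff_exists_left_eq.1 hu
      exact ⟨⟨i, v, hv⟩, rfl⟩⟩

@[simp]
theorem Pi.lowerCoversEquiv_apply [DecidableEq ι] (b : ∀ i, α i) (x : Σ i, {v // v ⋖ b i}) :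
    (Pi.lowerCoversEquiv b x : ∀ i, α i) = update b x.1 x.2 :=
  rfl

theorem numCoverChains_pi [Fintype ι] [DecidableEq ι] [∀ i, Finite (α i)] (a b : ∀ i, α i)
    (N : ℕ) : numCoverChains a b N =
      ∑ w : Fin N → ι, ∏ i, numCoverChains (a i) (b i) #{j | w j = i} := by
  classical
  have := fun i => Fintype.ofFinite (α i)
  induction N generalizing b with
  | zero => simp [numCoverChains_zero, prod_boole, funext_iff]
  | succ N ih =>
    -- The coordinate `k` of the last step becomes the first letter of the word: only the
    -- letter counts enter the formula.
    rw [numCoverChains_succ, ← (Pi.lowerCoversEquiv b).sum_comp, Fintype.sum_sigma,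
      Fin.sum_univ_fun_succ]
    refine Fintype.sum_congr _ _ fun k => ?_
    simp only [Pi.lowerCoversEquiv_apply, ih, Fin.card_filter_cons_eq]
    rw [Finset.sum_comm]
    refine Fintype.sum_congr _ _ fun w => ?_
    rw [Fintype.prod_eq_mul_prod_compl k, if_pos rfl, numCoverChains_succ, sum_mul]
    refine Fintype.sum_congr _ _ fun v => ?_
    rw [Fintype.prod_eq_mul_prod_compl k, update_self]
    congr 1
    exact prod_congr rfl fun i hi => by
      have hki : k ≠ i := fun h => by simp [h] at hi
      rw [update_of_ne hki.symm, if_neg hki, add_zero]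

end Pi

theorem Nat.card_sigma_of_forall_eq {T : ℕ → Type*} {N : ℕ} (h : ∀ n, T n → n = N) :
    Nat.card (Σ n, T n) = Nat.card (T N) :=
  Nat.card_congr
    { toFun x := h x.1 x.2 ▸ x.2
      invFun t := ⟨N, t⟩
      left_inv := by rintro ⟨n, t⟩; obtain rfl := h n t; rfl
      right_inv _ := rfl }

section Subgroups

open Subgroup ArithmeticFunction ArithmeticFunction.Omega

theorem CommGroup.isSimpleGroup_iff_isSimpleOrder {Q : Type*} [CommGroup Q] :
    IsSimpleGroup Q ↔ IsSimpleOrder (Subgroup Q) :=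
  ⟨fun _ => inferInstance, fun _ =>
    { toNontrivial := nontrivial_iff.1 inferInstance
      eq_bot_or_eq_top_of_normal := fun H _ => IsSimpleOrder.eq_bot_or_eq_top H }⟩

variable {G : Type*} [CommGroup G]

theorem Subgroup.covBy_iff_isSimpleGroup {A B : Subgroup G} (h : A ≤ B) :
    A ⋖ B ↔ IsSimpleGroup (B ⧸ A.subgroupOf B) := by
  rw [covBy_iff_coatom_Iic h, CommGroup.isSimpleGroup_iff_isSimpleOrder,
    OrderIso.isSimpleOrder_iff (β := Set.Ici (A.subgroupOf B)) (QuotientGroup.comapMk'OrderIso _),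
    Set.isSimpleOrder_Ici_iff_isCoatom,
    ← OrderIso.isCoatom_iff (β := Set.Iic B) (MapSubtype.orderIso B)]
  exact Iff.of_eq (congrArg IsCoatom (Subtype.ext (map_subgroupOf_eq_of_le h).symm))

theorem Subgroup.prime_relIndex_of_covBy {A B : Subgroup G} (h : A ⋖ B) :
    (A.relIndex B).Prime := by
  rw [relIndex, index_eq_card, ← CommGroup.is_simple_iff_prime_card]
  exact (covBy_iff_isSimpleGroup h.le).1 h

theorem Subgroup.cardFactors_card_of_covBy [Finite G] {A B : Subgroup G} (h : A ⋖ B) :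
    Ω (Nat.card B) = Ω (Nat.card A) + 1 := by
  have hp := prime_relIndex_of_covBy h
  rw [← relIndex_bot_left, ← relIndex_mul_relIndex ⊥ A B bot_le h.le, relIndex_bot_left,
    cardFactors_mul Nat.card_pos.ne' hp.ne_zero, cardFactors_apply_prime hp]

theorem isCompSeries_iff_mem_coverChains {n : ℕ} (c : Fin (n + 1) → Subgroup G) :
    IsCompSeries c ↔ c ∈ coverChains ⊥ ⊤ n := by
  refine and_congr_right fun _ => and_congr_right fun _ => forall_congr' fun j => ?_
  exact ⟨fun ⟨hle, _, hs⟩ => (covBy_iff_isSimpleGroup hle).2 hs,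
    fun hc => ⟨hc.le, normal_of_isMulCommutative _, (covBy_iff_isSimpleGroup hc.le).1 hc⟩⟩

theorem eq_cardFactors_of_mem_coverChains [Finite G] {n : ℕ} {c : Fin (n + 1) → Subgroup G}
    (hc : c ∈ coverChains ⊥ ⊤ n) : n = Ω (Nat.card G) := by
  simpa [card_top] using (eq_add_of_mem_coverChains (fun K : Subgroup G => Ω (Nat.card K))
    (fun _ _ => cardFactors_card_of_covBy) hc).symm

theorem eq_cardFactors_of_numCoverChains_ne_zero [Finite G] {n : ℕ}
    (h : numCoverChains (⊥ : Subgroup G) ⊤ n ≠ 0) : n = Ω (Nat.card G) := by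
  obtain ⟨⟨c, hc⟩, -⟩ := Nat.card_ne_zero.1 h
  exact eq_cardFactors_of_mem_coverChains hc

theorem csCount_eq_numCoverChains [Finite G] :
    csCount G = numCoverChains (⊥ : Subgroup G) ⊤ (Ω (Nat.card G)) := by
  rw [csCount, Nat.card_sigma_of_forall_eq fun n c =>
      eq_cardFactors_of_mem_coverChains ((isCompSeries_iff_mem_coverChains c.1).1 c.2),
    numCoverChains]
  exact Nat.card_congr (Equiv.subtypeEquivRight isCompSeries_iff_mem_coverChains)

end Subgroups

section CoprimeProduct

open Subgroup

variable {ι : Type*} [DecidableEq ι] {H : ι → Type*} [∀ i, Group (H i)]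

theorem Subgroup.mulSingle_mem_of_coprime [Fintype ι]
    (hcop : Pairwise (Nat.Coprime on fun i => Nat.card (H i)))
    {K : Subgroup (∀ i, H i)} {k : ∀ i, H i} (hk : k ∈ K) (i : ι) : Pi.mulSingle i (k i) ∈ K := by
  set q := ∏ j ∈ univ.erase i, Nat.card (H j)
  have hq : q.Coprime (orderOf (k i)) :=
    Nat.Coprime.coprime_dvd_right (_root_.orderOf_dvd_natCard (k i))
      (Nat.Coprime.prod_left fun j hj => hcop (ne_of_mem_erase hj))
  obtain ⟨m, hm⟩ := exists_pow_eq_self_of_coprime hq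
  -- `k ^ (q * m)` is `k i` at `i` and trivial at every `j ≠ i`, since `|H j|` divides `q`.
  convert K.pow_mem hk (q * m) using 1
  funext j
  rcases eq_or_ne j i with rfl | hj
  · simp [pow_mul, hm]
  · obtain ⟨s, hs⟩ : Nat.card (H j) ∣ q := dvd_prod_of_mem _ (mem_erase.2 ⟨hj, mem_univ j⟩)
    simp [Pi.mulSingle_eq_of_ne hj, hs, pow_mul, pow_card_eq_one']

theorem Subgroup.map_eval_pi (B : ∀ i, Subgroup (H i)) (i : ι) :
    (pi Set.univ B).map (Pi.evalMonoidHom H i) = B i := by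
  refine le_antisymm ?_ fun b hb =>
    ⟨Pi.mulSingle i b, (mulSingle_mem_pi i b).2 fun _ => hb, by simp⟩
  rintro _ ⟨k, hk, rfl⟩
  exact (mem_pi _).1 hk i (Set.mem_univ i)

theorem Subgroup.pi_map_eval_of_coprime [Fintype ι]
    (hcop : Pairwise (Nat.Coprime on fun i => Nat.card (H i))) (K : Subgroup (∀ i, H i)) :
    pi Set.univ (fun i => K.map (Pi.evalMonoidHom H i)) = K := by
  refine le_antisymm (fun x hx => pi_mem_of_mulSingle_mem x fun i => ?_)
    fun x hx => (mem_pi _).2 fun i _ => ⟨x, hx, rfl⟩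
  obtain ⟨k, hk, hki⟩ := (mem_pi _).1 hx i (Set.mem_univ i)
  simpa [← hki] using mulSingle_mem_of_coprime hcop hk i

noncomputable def Subgroup.piOrderIsoOfCoprime [Fintype ι]
    (hcop : Pairwise (Nat.Coprime on fun i => Nat.card (H i))) :
    Subgroup (∀ i, H i) ≃o ∀ i, Subgroup (H i) where
  toFun K i := K.map (Pi.evalMonoidHom H i)
  invFun B := pi Set.univ B
  left_inv := pi_map_eval_of_coprime hcop
  right_inv B := funext (map_eval_pi B)
  map_rel_iff' {K K'} := by
    refine ⟨fun h => ?_, fun h i => map_mono h⟩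
    rw [← pi_map_eval_of_coprime hcop K, ← pi_map_eval_of_coprime hcop K']
    exact fun x hx => (mem_pi _).2 fun i hi => h i ((mem_pi _).1 hx i hi)

end CoprimeProduct

noncomputable def Subgroup.piMulEquivOfCoprime {G ι : Type*} [CommGroup G] [Finite G]
    [Fintype ι] (K : ι → Subgroup G) (hcop : Pairwise (Nat.Coprime on fun i => Nat.card (K i)))
    (hcard : ∏ i, Nat.card (K i) = Nat.card G) : (∀ i, K i) ≃* G :=
  MulEquiv.ofBijective (noncommPiCoprod fun _ _ _ x y _ _ => Commute.all x y) <| by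
    have := fun i => Fintype.ofFinite (K i)
    rw [Nat.bijective_iff_injective_and_card, Nat.card_pi, hcard]
    refine ⟨injective_noncommPiCoprod_of_iSupIndep
      (independent_of_coprime_order (fun _ _ _ x y _ _ => Commute.all x y) ?_), rfl⟩
    simpa [Nat.card_eq_fintype_card] using hcop

section PrimePowers

open ArithmeticFunction ArithmeticFunction.Omega

variable {ι : Type*} [Fintype ι] {p : ι → ℕ} (a : ι → ℕ)

theorem Nat.factorization_prod_pow_apply (hp : ∀ i, (p i).Prime) (hinj : Injective p) (i : ι) :
    (∏ j, p j ^ a j).factorization (p i) = a i := by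
  rw [Nat.factorization_prod fun j _ => pow_ne_zero _ (hp j).ne_zero, Finsupp.finsetSum_apply,
    sum_eq_single i (fun j _ hj => by
      rw [(hp j).factorization_pow, Finsupp.single_eq_of_ne (hinj.ne hj).symm]) (by simp),
    (hp i).factorization_pow, Finsupp.single_eq_same]

theorem ArithmeticFunction.cardFactors_prod_pow (hp : ∀ i, (p i).Prime) :
    Ω (∏ j, p j ^ a j) = ∑ j, a j := by
  have h0 : ∏ j, p j ^ a j ≠ 0 := prod_ne_zero_iff.2 fun j _ => pow_ne_zero _ (hp j).ne_zero
  rw [prod_eq_multiset_prod] at h0 ⊢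
  rw [cardFactors_multiset_prod h0, Multiset.map_map, sum_eq_multiset_sum]
  exact congrArg Multiset.sum (Multiset.map_congr rfl fun j _ => cardFactors_apply_prime_pow (hp j))

end PrimePowers

theorem csCount_of_abelian_eq_prod_sylow_csCount_general (G : Type*) [CommGroup G] [Finite G]
    (r : ℕ) (p a : Fin r → ℕ) (hp : ∀ i, (p i).Prime) (hinj : Function.Injective p)
    (hcard : Nat.card G = ∏ i, p i ^ a i)
    (P : ∀ i, Sylow (p i) G) (t : Fin r → ℕ)
    (ht : ∀ i, t i = csCount ((P i : Subgroup G) : Type _)) :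
    csCount G = (∏ i, t i) * Nat.multinomial Finset.univ a := by
  have := fun i => Fact.mk (hp i)
  have hcardP : ∀ i, Nat.card (P i) = p i ^ a i := fun i => by
    rw [Sylow.card_eq_multiplicity, hcard, Nat.factorization_prod_pow_apply a hp hinj]
  have hcop : Pairwise (Nat.Coprime on fun i => Nat.card (P i)) := fun i j hij => by
    simpa only [onFun, hcardP] using
      Nat.Coprime.pow _ _ ((Nat.coprime_primes (hp i) (hp j)).2 (hinj.ne hij))
  let e : Subgroup G ≃o ∀ i, Subgroup (P i) :=
    (Subgroup.piMulEquivOfCoprime (fun i => (P i : Subgroup G)) hcop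
      (by simp only [hcardP, hcard])).symm.mapSubgroup.trans (Subgroup.piOrderIsoOfCoprime hcop)
  have hlen : ∀ i m, numCoverChains (⊥ : Subgroup (P i)) ⊤ m ≠ 0 → m = a i := fun i m h => by
    rw [eq_cardFactors_of_numCoverChains_ne_zero h, hcardP,
      ArithmeticFunction.cardFactors_apply_prime_pow (hp i)]
  rw [csCount_eq_numCoverChains, ← e.numCoverChains_eq, map_bot, map_top, numCoverChains_pi,
    hcard, ArithmeticFunction.cardFactors_prod_pow a hp]
  simp only [Pi.bot_apply, Pi.top_apply]
  rw [sum_prod_eq_multinomial_mul rfl _ hlen, mul_comm]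
  congr 1
  refine Fintype.prod_congr _ _ fun i => ?_
  rw [ht, csCount_eq_numCoverChains, hcardP, ArithmeticFunction.cardFactors_apply_prime_pow (hp i)]

theorem csCount_of_abelian_eq_prod_sylow_csCount (G : Type*) [CommGroup G] [Finite G]
    (r : ℕ) (p a : Fin r → ℕ) (hp : ∀ i, (p i).Prime) (hinj : Function.Injective p)
    (ha : ∀ i, 1 ≤ a i) (hcard : Nat.card G = ∏ i, p i ^ a i)
    (P : ∀ i, Sylow (p i) G) (t : Fin r → ℕ)
    (ht : ∀ i, t i = csCount ((P i : Subgroup G) : Type _)) :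
    csCount G = (∏ i, t i) * Nat.multinomial Finset.univ a :=
  csCount_of_abelian_eq_prod_sylow_csCount_general G r p a hp hinj hcard P t ht
end

section
/- For every integer n ≥ 4 and every odd prime p, the inequality 2^{⌊log_2 n⌋} − 1 > (p^{⌊log_p n⌋} − 1)/(p − 1) holds. -/
/-!
Let `k = ⌊log₂ n⌋` and `m = ⌊log_p n⌋`, so `p ^ m ≤ n < 2 ^ (k + 1)` and `k ≥ 2`. After clearing the
denominator the claim is `p ^ m - 1 < (2 ^ k - 1) (p - 1)`. For `p ≥ 4` the right side is at least
`3 (2 ^ k - 1) ≥ 2 ^ (k + 1)`. For `p = 3` it is `2 ^ (k + 1) - 2`, so one only has to exclude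
`3 ^ m = 2 ^ (k + 1) - 1`, which is impossible modulo `8`.
-/

namespace Nat

theorem three_pow_mod_eight (m : ℕ) : 3 ^ m % 8 = 1 ∨ 3 ^ m % 8 = 3 := by
  induction m with
  | zero => simp
  | succ m ih => rw [pow_succ, Nat.mul_mod]; rcases ih with h | h <;> simp [h]

theorem three_pow_ne_two_pow_sub_one (m : ℕ) {j : ℕ} (hj : 3 ≤ j) : 3 ^ m ≠ 2 ^ j - 1 := by
  have h8 : 8 ∣ 2 ^ j := (Nat.pow_dvd_pow 2 hj : 2 ^ 3 ∣ 2 ^ j)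
  have hpos : 0 < 2 ^ j := by positivity
  rcases three_pow_mod_eight m with h | h <;> omega

theorem two_le_log_two {n : ℕ} (hn : 4 ≤ n) : 2 ≤ log 2 n :=
  le_log_of_pow_le one_lt_two hn

theorem four_le_two_pow_log_two {n : ℕ} (hn : 4 ≤ n) : 4 ≤ 2 ^ log 2 n :=
  calc 4 = 2 ^ 2 := rfl
    _ ≤ 2 ^ log 2 n := Nat.pow_le_pow_right two_pos (two_le_log_two hn)

theorem pow_log_lt_two_pow_succ_log_two (p : ℕ) {n : ℕ} (hn : n ≠ 0) :
    p ^ log p n < 2 ^ (log 2 n + 1) :=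
  (pow_log_le_self p hn).trans_lt (lt_pow_succ_log_self one_lt_two n)

theorem pow_log_sub_one_lt_of_four_le {n p : ℕ} (hn : 4 ≤ n) (hp : 4 ≤ p) :
    p ^ log p n - 1 < (2 ^ log 2 n - 1) * (p - 1) := by
  have hlt := pow_log_lt_two_pow_succ_log_two p (n := n) (by omega)
  have h4 := four_le_two_pow_log_two hn
  rw [pow_succ] at hlt
  calc p ^ log p n - 1 < (2 ^ log 2 n - 1) * 3 := by omega
    _ ≤ (2 ^ log 2 n - 1) * (p - 1) := Nat.mul_le_mul_left _ (by omega)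

theorem three_pow_log_sub_one_lt {n : ℕ} (hn : 4 ≤ n) :
    3 ^ log 3 n - 1 < (2 ^ log 2 n - 1) * 2 := by
  have hlt := pow_log_lt_two_pow_succ_log_two 3 (n := n) (by omega)
  have hne := three_pow_ne_two_pow_sub_one (log 3 n) (j := log 2 n + 1) (by
    have := two_le_log_two hn; omega)
  have h4 := four_le_two_pow_log_two hn
  rw [pow_succ] at hlt hne
  omega

end Nat

theorem two_pow_log_sub_one_gt_general (n p : ℕ) (hn : 4 ≤ n) (hodd : Odd p) :
    2 ^ Nat.log 2 n - 1 > (p ^ Nat.log p n - 1) / (p - 1) := by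
  have hp2 : p ≠ 2 := by rintro rfl; exact Nat.not_even_iff_odd.mpr hodd even_two
  rw [gt_iff_lt]
  rcases le_or_gt p 1 with hp1 | hp1
  · have h4 := Nat.four_le_two_pow_log_two hn
    simp only [Nat.log_of_left_le_one hp1, pow_zero, Nat.sub_self, Nat.zero_div]
    omega
  rw [Nat.div_lt_iff_lt_mul (by omega)]
  rcases (show p = 3 ∨ 4 ≤ p by omega) with rfl | hp4
  · exact Nat.three_pow_log_sub_one_lt hn
  · exact Nat.pow_log_sub_one_lt_of_four_le hn hp4

theorem two_pow_log_sub_one_gt (n p : ℕ) (hn : 4 ≤ n) (hp : p.Prime) (hodd : Odd p) :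
    2 ^ Nat.log 2 n - 1 > (p ^ Nat.log p n - 1) / (p - 1) :=
  two_pow_log_sub_one_gt_general n p hn hodd
end

section
/- For every integer n ≥ 4 and every odd prime p, ∏_{i=1}^{⌊log_2 n⌋} (2^i − 1) > ∏_{i=1}^{⌊log_p n⌋} (p^i − 1)/(p − 1). -/
/-!
Write `a = log₂ n` and `b = log_p n`, so that `p ^ b ≤ n < 2 ^ (a + 1)`, and `b < a` because
`p ≥ 3`. Each factor `(p ^ i - 1) / (p - 1)` is at most `p ^ i / 2`, so `2 ^ b` times the right
side is at most `p ^ (b (b + 1) / 2)`, whose square `(p ^ b) ^ (b + 1)` is below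
`2 ^ ((a + 1) (b + 1))`. For `a ≥ 3` the left side is at least `2 ^ (a (a - 1) / 2 + 1)`
(factorwise `2 ^ i - 1 ≥ 2 ^ (i - 1)`, with one spare factor `2` from `1 · 3 · 7 > 2 ^ 3`), and
`(a + 1) (b + 1) ≤ 2 b + a (a - 1) + 2` as soon as `b < a`. For `n < 8` the right side is `1`.
-/

open Finset

theorem sum_Icc_id_mul_two (b : ℕ) : (∑ i ∈ Icc 1 b, i) * 2 = b * (b + 1) := by
  induction b with
  | zero => rfl
  | succ k ih => rw [sum_Icc_succ_top (by omega), add_mul, ih]; ring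

theorem two_pow_succ_le_three_pow {k : ℕ} (hk : 2 ≤ k) : 2 ^ (k + 1) ≤ 3 ^ k := by
  induction k, hk using Nat.le_induction with
  | base => norm_num
  | succ k _ ih => rw [pow_succ, pow_succ 3]; omega

theorem two_pow_card_mul_prod_geom_le {p : ℕ} (hp : 3 ≤ p) (s : Finset ℕ) :
    2 ^ #s * ∏ i ∈ s, (p ^ i - 1) / (p - 1) ≤ p ^ ∑ i ∈ s, i := by
  have hfactor (i : ℕ) : 2 * ((p ^ i - 1) / (p - 1)) ≤ p ^ i :=
    calc 2 * ((p ^ i - 1) / (p - 1)) ≤ (p - 1) * ((p ^ i - 1) / (p - 1)) := by gcongr; omega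
      _ ≤ p ^ i - 1 := Nat.mul_div_le _ _
      _ ≤ p ^ i := Nat.sub_le _ _
  calc 2 ^ #s * ∏ i ∈ s, (p ^ i - 1) / (p - 1) = ∏ i ∈ s, 2 * ((p ^ i - 1) / (p - 1)) := by
        rw [prod_mul_distrib, prod_const]
    _ ≤ ∏ i ∈ s, p ^ i := prod_le_prod' fun i _ ↦ hfactor i
    _ = p ^ ∑ i ∈ s, i := prod_pow_eq_pow_sum _ _ _

theorem two_pow_sum_range_add_one_le_prod_two_pow_sub_one {a : ℕ} (ha : 3 ≤ a) :
    2 ^ (∑ i ∈ range a, i + 1) ≤ ∏ i ∈ Icc 1 a, (2 ^ i - 1) := by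
  induction a, ha using Nat.le_induction with
  | base => decide
  | succ a _ ih =>
    have hfactor : 2 ^ a ≤ 2 ^ (a + 1) - 1 := by
      have := Nat.one_le_two_pow (n := a)
      rw [pow_succ]; omega
    rw [sum_range_succ, prod_Icc_succ_top (by omega), add_right_comm, pow_add]
    exact Nat.mul_le_mul ih hfactor

theorem prod_geom_lt_prod_two_pow_sub_one {p a b : ℕ} (hp : 3 ≤ p) (ha : 3 ≤ a)
    (hpb : p ^ b < 2 ^ (a + 1)) :
    ∏ i ∈ Icc 1 b, (p ^ i - 1) / (p - 1) < ∏ i ∈ Icc 1 a, (2 ^ i - 1) := by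
  have hba : b < a := by
    by_contra! hab
    have : 2 ^ (a + 1) ≤ p ^ b :=
      calc 2 ^ (a + 1) ≤ 3 ^ a := two_pow_succ_le_three_pow (by omega)
        _ ≤ 3 ^ b := Nat.pow_le_pow_right (by norm_num) hab
        _ ≤ p ^ b := Nat.pow_le_pow_left hp b
    omega
  set R := ∏ i ∈ Icc 1 b, (p ^ i - 1) / (p - 1)
  set L := ∏ i ∈ Icc 1 a, (2 ^ i - 1)
  set E := ∑ i ∈ range a, i
  have hR : 2 ^ b * R ≤ p ^ ∑ i ∈ Icc 1 b, i := by
    simpa using two_pow_card_mul_prod_geom_le hp (Icc 1 b)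
  have hL : 2 ^ (E + 1) ≤ L := two_pow_sum_range_add_one_le_prod_two_pow_sub_one ha
  have hE : E * 2 = a * (a - 1) := sum_range_id_mul_two a
  have hexp : (a + 1) * (b + 1) ≤ (b + (E + 1)) * 2 := by
    obtain ⟨c, rfl⟩ := Nat.exists_eq_add_of_lt hba
    rw [Nat.add_sub_cancel] at hE
    nlinarith
  refine Nat.lt_of_mul_lt_mul_left (a := 2 ^ b) (lt_of_pow_lt_pow_left₀ 2 (Nat.zero_le _) ?_)
  calc (2 ^ b * R) ^ 2 ≤ (p ^ ∑ i ∈ Icc 1 b, i) ^ 2 := by gcongr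
    _ = (p ^ b) ^ (b + 1) := by rw [← pow_mul, ← pow_mul, sum_Icc_id_mul_two]
    _ < (2 ^ (a + 1)) ^ (b + 1) := Nat.pow_lt_pow_left hpb (by omega)
    _ ≤ (2 ^ (b + (E + 1))) ^ 2 := by
      rw [← pow_mul, ← pow_mul]; exact Nat.pow_le_pow_right two_pos hexp
    _ ≤ (2 ^ b * L) ^ 2 := by rw [pow_add]; gcongr

theorem prod_two_pow_sub_one_gt (n p : ℕ) (hn : 4 ≤ n) (hp : p.Prime) (hodd : Odd p) :
    ∏ i ∈ Finset.Icc 1 (Nat.log 2 n), (2 ^ i - 1) >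
      ∏ i ∈ Finset.Icc 1 (Nat.log p n), (p ^ i - 1) / (p - 1) := by
  have hp3 : 3 ≤ p := by
    have := hp.two_le
    obtain ⟨k, rfl⟩ := hodd
    omega
  have hn0 : n ≠ 0 := by omega
  rcases le_or_gt 8 n with hn8 | hn8
  · exact prod_geom_lt_prod_two_pow_sub_one hp3
      (Nat.le_log_of_pow_le one_lt_two (by omega))
      ((Nat.pow_log_le_self p hn0).trans_lt (Nat.lt_pow_succ_log_self one_lt_two n))
  · have ha : Nat.log 2 n = 2 := Nat.log_eq_of_pow_le_of_lt_pow (by omega) (by omega)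
    have hb2 : Nat.log p n < 2 := Nat.log_lt_of_lt_pow hn0 (by nlinarith)
    obtain hb | hb : Nat.log p n = 0 ∨ Nat.log p n = 1 := by omega
    all_goals simp [ha, hb, Nat.div_self (show 0 < p - 1 by omega)]; decide
end

section
/- Let p ≥ 3 be a prime, α_r ≥ 1 an integer (with α_r ≥ 2 if p = 3), t = p^{α_r}, and k = ⌊log_2 t⌋. Then the function f(α_1) = ∏_{i=1}^{α_1+k}(2^i−1) / ( ∏_{i=1}^{α_1}(2^i−1) · ∏_{j=1}^{α_r}((p^j−1)/(p−1)) · (α_1+α_r)!/(α_1! α_r!) ) is strictly monotone increasing in the nonnegative integer α_1, i.e., f(α_1+1) > f(α_1) for all α_1 ≥ 0. -/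
/-!
With `m = α₁` and `r = αᵣ`, the quotient `f (m+1) / f m` telescopes to
`(2^(m+k+1) - 1)(m+1) / ((2^(m+1) - 1)(m+r+1))`, the factor over `j ≤ r` being a positive constant.
Since `p ≥ 2` gives `k ≥ r` and so `2^k ≥ r + 1`, the numerator is at least `(2^(m+1)(r+1) - 1)(m+1)`,
which exceeds the denominator by `r (2^(m+1) m + 1) > 0`.
-/

open Finset Nat

lemma prod_Icc_add_div_prod_Icc_succ {M : Type*} [DivisionCommMonoid M] (a : ℕ → M) (m k : ℕ) :
    (∏ i ∈ Icc 1 (m + 1 + k), a i) / ∏ i ∈ Icc 1 (m + 1), a i =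
      (∏ i ∈ Icc 1 (m + k), a i) / (∏ i ∈ Icc 1 m, a i) * (a (m + k + 1) / a (m + 1)) := by
  rw [show m + 1 + k = m + k + 1 by omega, prod_Icc_succ_top (by omega),
    prod_Icc_succ_top (by omega), mul_div_mul_comm]

section OrderedField

variable {K : Type*} [Field K] [LinearOrder K] [IsStrictOrderedRing K]

lemma prod_Icc_two_pow_sub_one_pos (n : ℕ) : 0 < ∏ i ∈ Icc 1 n, ((2 : K) ^ i - 1) :=
  prod_pos fun i hi ↦ sub_pos.2 (one_lt_pow₀ one_lt_two (by simp at hi; omega))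

lemma prod_Icc_geom_pos {x : K} (hx : 1 < x) (r : ℕ) :
    0 < ∏ j ∈ Icc 1 r, ((x ^ j - 1) / (x - 1)) :=
  prod_pos fun j hj ↦
    div_pos (sub_pos.2 (one_lt_pow₀ hx (by simp at hj; omega))) (sub_pos.2 hx)

lemma factorial_add_div_succ (m r : ℕ) :
    ((m + 1 + r)! : K) / ((m + 1)! * r !) =
      (m + r)! / (m ! * r !) * (((m : K) + r + 1) / (m + 1)) := by
  rw [show m + 1 + r = m + r + 1 by omega, Nat.factorial_succ, Nat.factorial_succ]
  push_cast
  field_simp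

lemma two_pow_sub_one_mul_lt {m k r : ℕ} (hr : 1 ≤ r) (hrk : r < 2 ^ k) :
    ((2 : K) ^ (m + 1) - 1) * (m + r + 1) < (2 ^ (m + k + 1) - 1) * (m + 1) := by
  have hv : (r : K) + 1 ≤ 2 ^ k := by exact_mod_cast hrk
  calc ((2 : K) ^ (m + 1) - 1) * (m + r + 1)
      < (2 ^ (m + 1) * (r + 1) - 1) * (m + 1) := by
        have hgap : (0 : K) < r * (2 ^ (m + 1) * m + 1) := by positivity
        linear_combination hgap
    _ ≤ (2 ^ (m + 1) * 2 ^ k - 1) * (m + 1) := by gcongr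
    _ = (2 ^ (m + k + 1) - 1) * (m + 1) := by ring

lemma strictMono_prod_two_pow_div {c : K} (hc : 0 < c) {k r : ℕ} (hr : 1 ≤ r)
    (hrk : r < 2 ^ k) :
    StrictMono fun m : ℕ ↦
      (∏ i ∈ Icc 1 (m + k), ((2 : K) ^ i - 1)) /
        ((∏ i ∈ Icc 1 m, ((2 : K) ^ i - 1)) * c * (((m + r)! : K) / (m ! * r !))) := by
  refine strictMono_nat_of_lt_succ fun m ↦ ?_
  set g : ℕ → K := fun n ↦
    (∏ i ∈ Icc 1 (n + k), ((2 : K) ^ i - 1)) / ∏ i ∈ Icc 1 n, ((2 : K) ^ i - 1)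
  set h : ℕ → K := fun n ↦ ((n + r)! : K) / (n ! * r !)
  have hf : ∀ n, (∏ i ∈ Icc 1 (n + k), ((2 : K) ^ i - 1)) /
      ((∏ i ∈ Icc 1 n, ((2 : K) ^ i - 1)) * c * (((n + r)! : K) / (n ! * r !))) = g n / (c * h n) :=
    fun n ↦ by simp only [g, h, div_div, mul_assoc]
  have hg_pos : 0 < g m :=
    div_pos (prod_Icc_two_pow_sub_one_pos _) (prod_Icc_two_pow_sub_one_pos _)
  have hh_pos : 0 < h m := by positivity
  have hstep : g (m + 1) / (c * h (m + 1)) = g m / (c * h m) *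
      (((2 : K) ^ (m + k + 1) - 1) / (2 ^ (m + 1) - 1) / (((m : K) + r + 1) / (m + 1))) := by
    have hg : g (m + 1) = g m * (((2 : K) ^ (m + k + 1) - 1) / (2 ^ (m + 1) - 1)) :=
      prod_Icc_add_div_prod_Icc_succ _ m k
    have hh : h (m + 1) = h m * (((m : K) + r + 1) / (m + 1)) := factorial_add_div_succ m r
    rw [hg, hh, ← mul_assoc, mul_div_mul_comm]
  have hratio :
      1 < ((2 : K) ^ (m + k + 1) - 1) / (2 ^ (m + 1) - 1) / (((m : K) + r + 1) / (m + 1)) := by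
    have hu : (0 : K) < 2 ^ (m + 1) - 1 := sub_pos.2 (one_lt_pow₀ one_lt_two (by omega))
    rw [one_lt_div (by positivity), div_lt_div_iff₀ (by positivity) hu]
    exact (mul_comm _ _).trans_lt (two_pow_sub_one_mul_lt hr hrk)
  rw [hf, hf, hstep]
  exact lt_mul_of_one_lt_right (by positivity) hratio

end OrderedField

lemma lt_two_pow_log_two_pow {p : ℕ} (hp : 2 ≤ p) (r : ℕ) : r < 2 ^ Nat.log 2 (p ^ r) :=
  Nat.lt_two_pow_self.trans_le <| Nat.pow_le_pow_right two_pos <|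
    Nat.le_log_of_pow_le one_lt_two (Nat.pow_le_pow_left hp r)

theorem f_strict_mono_general (p αr : ℕ) (hp3 : 3 ≤ p) (hαr : 1 ≤ αr) :
    let k := Nat.log 2 (p ^ αr)
    let f : ℕ → ℚ := fun m =>
      (∏ i ∈ Finset.Icc 1 (m + k), ((2 : ℚ) ^ i - 1)) /
        ((∏ i ∈ Finset.Icc 1 m, ((2 : ℚ) ^ i - 1)) *
          (∏ j ∈ Finset.Icc 1 αr, (((p : ℚ) ^ j - 1) / ((p : ℚ) - 1))) *
          ((Nat.factorial (m + αr) : ℚ) / ((Nat.factorial m : ℚ) * (Nat.factorial αr : ℚ))))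
    ∀ α₁ : ℕ, f (α₁ + 1) > f α₁ := by
  intro k f α₁
  have hp1 : (1 : ℚ) < p := by exact_mod_cast (by omega : 1 < p)
  exact strictMono_prod_two_pow_div (prod_Icc_geom_pos hp1 αr) hαr
    (lt_two_pow_log_two_pow (by omega) αr) (Nat.lt_succ_self α₁)

theorem f_strict_mono (p αr : ℕ) (hp : p.Prime) (hp3 : 3 ≤ p) (hαr : 1 ≤ αr)
    (h3 : p = 3 → 2 ≤ αr) :
    let k := Nat.log 2 (p ^ αr)
    let f : ℕ → ℚ := fun m =>
      (∏ i ∈ Finset.Icc 1 (m + k), ((2 : ℚ) ^ i - 1)) /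
        ((∏ i ∈ Finset.Icc 1 m, ((2 : ℚ) ^ i - 1)) *
          (∏ j ∈ Finset.Icc 1 αr, (((p : ℚ) ^ j - 1) / ((p : ℚ) - 1))) *
          ((Nat.factorial (m + αr) : ℚ) / ((Nat.factorial m : ℚ) * (Nat.factorial αr : ℚ))))
    ∀ α₁ : ℕ, f (α₁ + 1) > f α₁ :=
  f_strict_mono_general p αr hp3 hαr
end

section
/- Let p ≥ 3 be a prime and α_r ≥ 1 (with α_r ≥ 2 if p = 3), and let k = ⌊log_2 p^{α_r}⌋. Then for every integer α_1 ≥ 0: ∏_{i=α_1+1}^{α_1+k}(2^i − 1) · α_1! · α_r! > ∏_{j=1}^{α_r} ((p^j − 1)/(p − 1)) · (α_1 + α_r)!. -/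
/-!
Write `[j]_p = (p^j - 1)/(p - 1) = ∑_{i<j} p^i` and `M_i = 2^i - 1`. Since
`(p - 1)[n]_p < p^n < 2^(log₂ p^n + 1)` and `p - 1 ≥ 2`, we get `[n]_p ≤ M_{log₂ p^n}`; as
`log₂ p^n` is strictly increasing in `n`, induction on `r` turns this into
`∏_{j ≤ r} [j]_p < ∏_{i ≤ k} M_i` for `k = log₂ p^r`, strict once it is strict in the base case
(`r = 1`, or `r = 2` when `p = 3`). Shifting the Mersenne factors by `a = α₁` gains at least
`2^{ak}`, because `2^a M_i ≤ M_{a+i}`, and `2^{ak} ≥ (r + 1)^a ≥ C(a + r, a) = (a + r)!/(a! r!)`.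
-/

open Finset Nat

theorem cast_mersenne {R : Type*} [Ring R] (k : ℕ) : (mersenne k : R) = 2 ^ k - 1 := by
  have h : ((mersenne k + 1 : ℕ) : R) = ((2 ^ k : ℕ) : R) := by rw [succ_mersenne]
  push_cast at h
  exact eq_sub_of_add_eq h

theorem two_pow_mul_mersenne_le (a i : ℕ) : 2 ^ a * mersenne i ≤ mersenne (a + i) := by
  have h := succ_mersenne (a + i)
  rw [pow_add, ← succ_mersenne i, mul_add_one] at h
  have := Nat.one_le_two_pow (n := a)
  omega

theorem two_pow_mul_prod_mersenne_le (a k : ℕ) :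
    2 ^ (a * k) * ∏ i ∈ Icc 1 k, mersenne i ≤ ∏ i ∈ Icc (a + 1) (a + k), mersenne i := by
  have hpow : (2 ^ a) ^ k = ∏ _i ∈ Icc 1 k, 2 ^ a := by simp
  rw [← map_add_left_Icc, prod_map, pow_mul, hpow, ← prod_mul_distrib]
  exact prod_le_prod' fun i _ => two_pow_mul_mersenne_le a i

theorem prod_mersenne_mul_le {k k' : ℕ} (h : k < k') :
    (∏ i ∈ Icc 1 k, mersenne i) * mersenne k' ≤ ∏ i ∈ Icc 1 k', mersenne i := by
  obtain ⟨m, rfl⟩ : ∃ m, k' = m + 1 := ⟨k' - 1, by omega⟩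
  rw [prod_Icc_succ_top (by omega)]
  gcongr
  · exact fun i hi _ => mersenne_pos.2 (mem_Icc.1 hi).1
  · omega

theorem geomSum_lt_two_pow_log {p : ℕ} (hp : 3 ≤ p) (n : ℕ) :
    ∑ i ∈ range n, p ^ i < 2 ^ log 2 (p ^ n) := by
  obtain ⟨q, rfl⟩ : ∃ q, p = q + 1 := ⟨p - 1, by omega⟩
  have hgeom := geom_sum_mul_add q n
  have hlog := lt_pow_succ_log_self one_lt_two ((q + 1) ^ n)
  rw [pow_succ] at hlog
  nlinarith [Nat.mul_le_mul_left (∑ i ∈ range n, (q + 1) ^ i) (by omega : 2 ≤ q)]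

theorem log_two_pow_succ_lt {p : ℕ} (hp : 2 ≤ p) (n : ℕ) :
    log 2 (p ^ n) < log 2 (p ^ (n + 1)) := by
  calc log 2 (p ^ n) < log 2 (p ^ n) + 1 := lt_add_one _
    _ = log 2 (p ^ n * 2) := (log_mul_base one_lt_two (by positivity)).symm
    _ ≤ log 2 (p ^ (n + 1)) := log_mono_right (by rw [pow_succ]; gcongr)

theorem le_log_two_pow {p : ℕ} (hp : 2 ≤ p) (n : ℕ) : n ≤ log 2 (p ^ n) :=
  le_log_of_pow_le one_lt_two (Nat.pow_le_pow_left hp n)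

theorem prod_geomSum_lt_prod_mersenne_succ {p n : ℕ} (hp : 3 ≤ p)
    (h : ∏ j ∈ Icc 1 n, ∑ i ∈ range j, p ^ i < ∏ i ∈ Icc 1 (log 2 (p ^ n)), mersenne i) :
    ∏ j ∈ Icc 1 (n + 1), ∑ i ∈ range j, p ^ i
      < ∏ i ∈ Icc 1 (log 2 (p ^ (n + 1))), mersenne i := by
  have hS : ∑ i ∈ range (n + 1), p ^ i ≤ mersenne (log 2 (p ^ (n + 1))) := by
    have := geomSum_lt_two_pow_log hp (n + 1)
    rw [mersenne]
    omega
  rw [prod_Icc_succ_top (by omega)]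
  calc _ < (∏ i ∈ Icc 1 (log 2 (p ^ n)), mersenne i) * ∑ i ∈ range (n + 1), p ^ i :=
        Nat.mul_lt_mul_of_pos_right h (by simp [sum_range_succ'])
    _ ≤ _ := (Nat.mul_le_mul_left _ hS).trans
        (prod_mersenne_mul_le (log_two_pow_succ_lt (by omega) n))

theorem prod_geomSum_lt_prod_mersenne {p r : ℕ} (hp : 3 ≤ p) (hr : 1 ≤ r)
    (h3 : p = 3 → 2 ≤ r) :
    ∏ j ∈ Icc 1 r, ∑ i ∈ range j, p ^ i < ∏ i ∈ Icc 1 (log 2 (p ^ r)), mersenne i := by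
  rcases hp.eq_or_lt with rfl | hp4
  · induction r, h3 rfl using Nat.le_induction with
    | base => decide
    | succ n _ ih =>
      exact prod_geomSum_lt_prod_mersenne_succ le_rfl (ih (by omega) fun _ => ‹_›)
  · induction r, hr using Nat.le_induction with
    | base =>
      have hlog : 2 ≤ log 2 p := le_log_of_pow_le one_lt_two (by omega)
      calc ∏ j ∈ Icc 1 1, ∑ i ∈ range j, p ^ i = 1 := by simp
        _ < mersenne 2 := by decide
        _ ≤ mersenne (log 2 p) := mersenne_le_mersenne.2 hlog
        _ ≤ ∏ i ∈ Icc 1 (log 2 (p ^ 1)), mersenne i := by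
          simpa [show mersenne 1 = 1 from rfl] using
            prod_mersenne_mul_le (k := 1) (k' := log 2 p) (by omega)
    | succ n _ ih => exact prod_geomSum_lt_prod_mersenne_succ hp (ih fun _ => by omega)

theorem factorial_add_le_succ_pow_mul_factorial_mul_factorial (a r : ℕ) :
    (a + r)! ≤ (r + 1) ^ a * a ! * r ! := by
  rw [← add_choose_mul_factorial_mul_factorial, add_comm a r]
  gcongr
  rw [choose_symm_add]
  have := choose_le_sub_pow (r + a) a
  rwa [show r + a + 1 - a = r + 1 by omega] at this

theorem prod_geomSum_mul_factorial_lt {p r : ℕ} (hp : 3 ≤ p) (hr : 1 ≤ r)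
    (h3 : p = 3 → 2 ≤ r) (a : ℕ) :
    (∏ j ∈ Icc 1 r, ∑ i ∈ range j, p ^ i) * (a + r)!
      < (∏ i ∈ Icc (a + 1) (a + log 2 (p ^ r)), mersenne i) * a ! * r ! := by
  set k := log 2 (p ^ r)
  have hpow : (r + 1) ^ a ≤ 2 ^ (a * k) := by
    rw [mul_comm, pow_mul]
    have hr2 : r + 1 ≤ 2 ^ k := (Nat.lt_two_pow_self (n := r)).trans_le
      (Nat.pow_le_pow_right two_pos (le_log_two_pow (by omega) r))
    exact Nat.pow_le_pow_left hr2 a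
  calc (∏ j ∈ Icc 1 r, ∑ i ∈ range j, p ^ i) * (a + r)!
      ≤ (∏ j ∈ Icc 1 r, ∑ i ∈ range j, p ^ i) * (2 ^ (a * k) * a ! * r !) := by
        gcongr
        exact (factorial_add_le_succ_pow_mul_factorial_mul_factorial a r).trans (by gcongr)
    _ < (∏ i ∈ Icc 1 k, mersenne i) * (2 ^ (a * k) * a ! * r !) := by
        gcongr
        exact prod_geomSum_lt_prod_mersenne hp hr h3
    _ ≤ (∏ i ∈ Icc (a + 1) (a + k), mersenne i) * a ! * r ! := by
        rw [← mul_assoc, ← mul_assoc, mul_comm _ (2 ^ _)]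
        gcongr
        exact two_pow_mul_prod_mersenne_le a k

theorem replacement_inequality_general (p αr : ℕ) (hp3 : 3 ≤ p) (hαr : 1 ≤ αr)
    (h3 : p = 3 → 2 ≤ αr) (k : ℕ) (hk : k = Nat.log 2 (p ^ αr)) (α₁ : ℕ) :
    (∏ i ∈ Finset.Icc (α₁ + 1) (α₁ + k), ((2 : ℚ) ^ i - 1)) *
        (Nat.factorial α₁ : ℚ) * (Nat.factorial αr : ℚ) >
      (∏ j ∈ Finset.Icc 1 αr, (((p : ℚ) ^ j - 1) / ((p : ℚ) - 1))) *
        (Nat.factorial (α₁ + αr) : ℚ) := by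
  have hp1 : (p : ℚ) ≠ 1 := by exact_mod_cast (by omega : p ≠ 1)
  have hgeom : ∏ j ∈ Icc 1 αr, ((p : ℚ) ^ j - 1) / ((p : ℚ) - 1)
      = ((∏ j ∈ Icc 1 αr, ∑ i ∈ range j, p ^ i : ℕ) : ℚ) := by
    push_cast
    exact prod_congr rfl fun j _ => (geom_sum_eq hp1 j).symm
  have hmersenne : ∏ i ∈ Icc (α₁ + 1) (α₁ + k), ((2 : ℚ) ^ i - 1)
      = ((∏ i ∈ Icc (α₁ + 1) (α₁ + k), mersenne i : ℕ) : ℚ) := by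
    push_cast [cast_mersenne]
    rfl
  rw [gt_iff_lt, hgeom, hmersenne, hk]
  exact_mod_cast prod_geomSum_mul_factorial_lt hp3 hαr h3 α₁

theorem replacement_inequality (p αr : ℕ) (hp : p.Prime) (hp3 : 3 ≤ p) (hαr : 1 ≤ αr)
    (h3 : p = 3 → 2 ≤ αr) (k : ℕ) (hk : k = Nat.log 2 (p ^ αr)) (α₁ : ℕ) :
    (∏ i ∈ Finset.Icc (α₁ + 1) (α₁ + k), ((2 : ℚ) ^ i - 1)) *
        (Nat.factorial α₁ : ℚ) * (Nat.factorial αr : ℚ) >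
      (∏ j ∈ Finset.Icc 1 αr, (((p : ℚ) ^ j - 1) / ((p : ℚ) - 1))) *
        (Nat.factorial (α₁ + αr) : ℚ) :=
  replacement_inequality_general p αr hp3 hαr h3 k hk α₁
end
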